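/- Let C₀ = {a, b, a², ab⁻¹a⁻¹b⁻¹} ⊆ F₂ and let G be the subgroup of Aut(F₂) generated by t_b (a ↦ ab, b ↦ b), y (a ↦ a⁻¹, b ↦ b), and w₁ (a ↦ a, b ↦ b⁻¹). Then for every element c of the set C (consisting of a^{±1}, a^{±2}, b^{±1}, (ab⁻¹a⁻¹b⁻¹)^{±1}, (ab^n)^{±1}, (a⁻¹b^n)^{±1}, (ab^nab^n)^{±1}, (a⁻¹b^na⁻¹b^n)^{±1}, n ∈ ℤ), there exists φ ∈ G such that φ(c) is conjugate to an element of C₀ or to the inverse of an element of C₀. -/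

import Mathlib

/-- `a` and `b`, the generators of `F₂ = FreeGroup (Fin 2)`. -/
def a : FreeGroup (Fin 2) := FreeGroup.of 0
def b : FreeGroup (Fin 2) := FreeGroup.of 1

/-- The class `C` of words representing simple closed curves on the punctured Klein
bottle, closed under inversion: `a^{±1}, a^{±2}, b^{±1}, (ab⁻¹a⁻¹b⁻¹)^{±1}`, and
`(abⁿ)^{±1}, (a⁻¹bⁿ)^{±1}, (abⁿabⁿ)^{±1}, (a⁻¹bⁿa⁻¹bⁿ)^{±1}` for `n ∈ ℤ`. -/
def C : Set (FreeGroup (Fin 2)) :=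
  {w | w = a ∨ w = a⁻¹ ∨ w = a ^ 2 ∨ w = (a ^ 2)⁻¹ ∨ w = b ∨ w = b⁻¹ ∨
    w = a * b⁻¹ * a⁻¹ * b⁻¹ ∨ w = (a * b⁻¹ * a⁻¹ * b⁻¹)⁻¹ ∨
    (∃ n : ℤ,
      w = a * b ^ n ∨ w = (a * b ^ n)⁻¹ ∨
      w = a⁻¹ * b ^ n ∨ w = (a⁻¹ * b ^ n)⁻¹ ∨
      w = a * b ^ n * a * b ^ n ∨ w = (a * b ^ n * a * b ^ n)⁻¹ ∨
      w = a⁻¹ * b ^ n * a⁻¹ * b ^ n ∨ w = (a⁻¹ * b ^ n * a⁻¹ * b ^ n)⁻¹)}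

/-!
The Dehn twist `tb` alone suffices. Its powers act by `tbⁿ a = a bⁿ`, `tbⁿ b = b`, so
`tb⁻ⁿ` sends `a bⁿ` to `a` and `a bⁿ a bⁿ` to `a²`, while `tbⁿ` sends `a⁻¹ bⁿ` to
`b⁻ⁿ a⁻¹ bⁿ` and `a⁻¹ bⁿ a⁻¹ bⁿ` to `b⁻ⁿ a⁻² bⁿ`, conjugates of `a⁻¹` and `(a²)⁻¹`.
The remaining words of `C` already lie in `C₀ ∪ C₀⁻¹`.
-/

theorem IsConj.inv {G : Type*} [Group G] {x y : G} (h : IsConj x y) : IsConj x⁻¹ y⁻¹ := by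
  obtain ⟨g, rfl⟩ := isConj_iff.1 h
  exact isConj_iff.2 ⟨g, conj_inv.symm⟩

namespace MulAut

variable {G : Type*} [Group G] {φ : MulAut G} {x t : G}

theorem zpow_apply_of_apply_eq_self (ht : φ t = t) (n : ℤ) : (φ ^ n) t = t := by
  induction n using Int.induction_on with
  | zero => rfl
  | succ k ih => rw [zpow_add_one, mul_apply, ht, ih]
  | pred k ih =>
    have ht' : φ⁻¹ t = t := by rw [inv_apply, MulEquiv.symm_apply_eq, ht]
    rw [zpow_sub_one, mul_apply, ht', ih]

theorem zpow_apply_of_apply_eq_mul (ht : φ t = t) (hx : φ x = x * t) (n : ℤ) :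
    (φ ^ n) x = x * t ^ n := by
  induction n using Int.induction_on with
  | zero => simp
  | succ k ih =>
    rw [zpow_add_one, mul_apply, hx, map_mul, ih, zpow_apply_of_apply_eq_self ht, zpow_add_one,
      mul_assoc]
  | pred k ih =>
    have hx' : φ⁻¹ x = x * t⁻¹ := by
      rw [inv_apply, MulEquiv.symm_apply_eq, map_mul, hx, map_inv, ht, mul_inv_cancel_right]
    rw [zpow_sub_one, mul_apply, hx', map_mul, ih, map_inv, zpow_apply_of_apply_eq_self ht,
      zpow_sub_one, mul_assoc]

theorem zpow_neg_apply_mul_zpow (ht : φ t = t) (hx : φ x = x * t) (n : ℤ) :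
    (φ ^ (-n)) (x * t ^ n) = x := by
  rw [map_mul, zpow_apply_of_apply_eq_mul ht hx, map_zpow, zpow_apply_of_apply_eq_self ht,
    mul_assoc, ← zpow_add, neg_add_cancel, zpow_zero, mul_one]

theorem zpow_neg_apply_mul_zpow_mul_mul_zpow (ht : φ t = t) (hx : φ x = x * t) (n : ℤ) :
    (φ ^ (-n)) (x * t ^ n * x * t ^ n) = x ^ 2 := by
  rw [mul_assoc (x * t ^ n) x, map_mul, zpow_neg_apply_mul_zpow ht hx, sq]

theorem isConj_inv_zpow_apply_inv_mul_zpow (ht : φ t = t) (hx : φ x = x * t) (n : ℤ) :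
    IsConj x⁻¹ ((φ ^ n) (x⁻¹ * t ^ n)) := by
  refine isConj_iff.2 ⟨t ^ (-n), ?_⟩
  rw [map_mul, map_inv, zpow_apply_of_apply_eq_mul ht hx, map_zpow,
    zpow_apply_of_apply_eq_self ht, mul_inv_rev, zpow_neg, inv_inv]

theorem isConj_inv_sq_zpow_apply_inv_mul_zpow_mul_inv_mul_zpow (ht : φ t = t)
    (hx : φ x = x * t) (n : ℤ) : IsConj (x ^ 2)⁻¹ ((φ ^ n) (x⁻¹ * t ^ n * x⁻¹ * t ^ n)) := by
  rw [mul_assoc (x⁻¹ * t ^ n) x⁻¹, ← sq, map_pow, ← inv_pow]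
  exact (isConj_inv_zpow_apply_inv_mul_zpow ht hx n).pow 2

end MulAut

section

variable {G : Type*} [Group G] {S : Subgroup (MulAut G)} {C₀ : Set G} {c : G}

def ConjReducible (S : Subgroup (MulAut G)) (C₀ : Set G) (c : G) : Prop :=
  ∃ φ ∈ S, ∃ c₀ ∈ C₀, IsConj c₀ (φ c) ∨ IsConj c₀⁻¹ (φ c)

namespace ConjReducible

theorem of_isConj {φ : MulAut G} (hφ : φ ∈ S) {c₀ : G} (hc₀ : c₀ ∈ C₀) (h : IsConj c₀ (φ c)) :
    ConjReducible S C₀ c :=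
  ⟨φ, hφ, c₀, hc₀, .inl h⟩

theorem of_isConj_inv {φ : MulAut G} (hφ : φ ∈ S) {c₀ : G} (hc₀ : c₀ ∈ C₀)
    (h : IsConj c₀⁻¹ (φ c)) : ConjReducible S C₀ c :=
  ⟨φ, hφ, c₀, hc₀, .inr h⟩

theorem of_apply_eq {φ : MulAut G} (hφ : φ ∈ S) (h : φ c ∈ C₀) : ConjReducible S C₀ c :=
  of_isConj hφ h (.refl _)

theorem of_mem (h : c ∈ C₀) : ConjReducible S C₀ c :=
  of_apply_eq S.one_mem h

theorem inv (h : ConjReducible S C₀ c) : ConjReducible S C₀ c⁻¹ := by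
  obtain ⟨φ, hφ, c₀, hc₀, hconj | hconj⟩ := h
  · exact of_isConj_inv hφ hc₀ (map_inv φ c ▸ hconj.inv)
  · exact of_isConj hφ hc₀ (map_inv φ c ▸ inv_inv c₀ ▸ hconj.inv)

end ConjReducible

end

theorem stmt_17_general (tb y w₁ : MulAut (FreeGroup (Fin 2)))
    (htba : tb a = a * b) (htbb : tb b = b) :
    ∀ c ∈ C, ∃ φ ∈ Subgroup.closure {tb, y, w₁},
      ∃ c₀ ∈ ({a, b, a ^ 2, a * b⁻¹ * a⁻¹ * b⁻¹} : Set (FreeGroup (Fin 2))),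
        IsConj c₀ (φ c) ∨ IsConj c₀⁻¹ (φ c) := by
  set S := Subgroup.closure {tb, y, w₁}
  set C₀ : Set (FreeGroup (Fin 2)) := {a, b, a ^ 2, a * b⁻¹ * a⁻¹ * b⁻¹}
  have htb_zpow_mem (n : ℤ) : tb ^ n ∈ S := zpow_mem (Subgroup.subset_closure (by simp)) n
  have hC₀ {c} (hc : c ∈ C₀) : ConjReducible S C₀ c := .of_mem hc
  have h₁ (n : ℤ) : ConjReducible S C₀ (a * b ^ n) :=
    .of_apply_eq (htb_zpow_mem (-n)) (by rw [MulAut.zpow_neg_apply_mul_zpow htbb htba]; simp [C₀])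
  have h₂ (n : ℤ) : ConjReducible S C₀ (a⁻¹ * b ^ n) :=
    .of_isConj_inv (htb_zpow_mem n) (by simp [C₀])
      (MulAut.isConj_inv_zpow_apply_inv_mul_zpow htbb htba n)
  have h₃ (n : ℤ) : ConjReducible S C₀ (a * b ^ n * a * b ^ n) :=
    .of_apply_eq (htb_zpow_mem (-n))
      (by rw [MulAut.zpow_neg_apply_mul_zpow_mul_mul_zpow htbb htba]; simp [C₀])
  have h₄ (n : ℤ) : ConjReducible S C₀ (a⁻¹ * b ^ n * a⁻¹ * b ^ n) :=
    .of_isConj_inv (htb_zpow_mem n) (by simp [C₀])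
      (MulAut.isConj_inv_sq_zpow_apply_inv_mul_zpow_mul_inv_mul_zpow htbb htba n)
  intro c hc
  rcases hc with rfl | rfl | rfl | rfl | rfl | rfl | rfl | rfl |
    ⟨n, rfl | rfl | rfl | rfl | rfl | rfl | rfl | rfl⟩
  exacts [hC₀ (by simp [C₀]), (hC₀ (by simp [C₀])).inv, hC₀ (by simp [C₀]),
    (hC₀ (by simp [C₀])).inv, hC₀ (by simp [C₀]), (hC₀ (by simp [C₀])).inv,
    hC₀ (by simp [C₀]), (hC₀ (by simp [C₀])).inv, h₁ n, (h₁ n).inv, h₂ n, (h₂ n).inv,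
    h₃ n, (h₃ n).inv, h₄ n, (h₄ n).inv]

/-- With `C₀ = {a, b, a², ab⁻¹a⁻¹b⁻¹}` and `G ≤ Aut(F₂)` generated by the Dehn twist
`t_b`, the `Y`-homeomorphism `y` and the boundary slide `w₁`, every `c ∈ C` is mapped
by some `φ ∈ G` to an element conjugate to an element of `C₀` or to the inverse of an
element of `C₀`. -/
theorem stmt_17 (tb y w₁ : MulAut (FreeGroup (Fin 2)))
    (htba : tb a = a * b) (htbb : tb b = b)
    (hya : y a = a⁻¹) (hyb : y b = b)
    (hw₁a : w₁ a = a) (hw₁b : w₁ b = b⁻¹) :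
    ∀ c ∈ C, ∃ φ ∈ Subgroup.closure {tb, y, w₁},
      ∃ c₀ ∈ ({a, b, a ^ 2, a * b⁻¹ * a⁻¹ * b⁻¹} : Set (FreeGroup (Fin 2))),
        IsConj c₀ (φ c) ∨ IsConj c₀⁻¹ (φ c) :=
  stmt_17_general tb y w₁ htba htbb
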